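/- arXiv:2011.05563 — 4 statements merged into one kernel-verified Lean document; each statement's English description precedes it below -/
import Mathlib

section
/- For every α with 0 < α < 1, the infimum over x ∈ (0,1) of (1 - (1-x)·e^{αx})/x equals 1 - α. -/
open Filter Topology Set Real

/-!
Write `g x = 1 - (1 - x) * exp (α * x)`. Since `g 0 = 0`, the ratio `g x / x` is a slope of `g` at `0`
and tends to `g' 0 = 1 - α` as `x → 0⁺`. It never drops below `1 - α`: multiplying
`(1 - x) * exp (α * x) ≤ 1 - (1 - α) * x` by `1 - α * x > 0` reduces it to `(1 - α * x) * exp (α * x) ≤ 1`,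
up to the nonnegative term `α * (1 - α) * x ^ 2`.
-/

theorem isGLB_image_of_tendsto {α β : Type*} [TopologicalSpace β] [LinearOrder β] [OrderTopology β]
    {f : α → β} {s : Set α} {l : Filter α} [l.NeBot] {c : β}
    (hs : s ∈ l) (hc : ∀ x ∈ s, c ≤ f x) (hf : Tendsto f l (𝓝 c)) : IsGLB (f '' s) c :=
  isGLB_of_mem_closure (forall_mem_image.2 hc)
    (mem_closure_of_tendsto hf (mem_of_superset hs fun _ hx => mem_image_of_mem f hx))

theorem one_sub_mul_exp_le_one (t : ℝ) : (1 - t) * exp t ≤ 1 := by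
  calc (1 - t) * exp t ≤ exp (-t) * exp t := by
        gcongr; linarith [add_one_le_exp (-t)]
    _ = 1 := by rw [← exp_add, neg_add_cancel, exp_zero]

theorem one_sub_mul_exp_mul_le {a x : ℝ} (ha₀ : 0 ≤ a) (ha₁ : a ≤ 1) (hx : x < 1) :
    (1 - x) * exp (a * x) ≤ 1 - (1 - a) * x := by
  have hax : 0 < 1 - a * x := by nlinarith [mul_nonneg ha₀ (sub_nonneg.2 hx.le)]
  refine le_of_mul_le_mul_right ?_ hax
  calc (1 - x) * exp (a * x) * (1 - a * x) = (1 - x) * ((1 - a * x) * exp (a * x)) := by ring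
    _ ≤ 1 - x := mul_le_of_le_one_right (by linarith) (one_sub_mul_exp_le_one _)
    _ ≤ (1 - (1 - a) * x) * (1 - a * x) := by
        nlinarith [mul_nonneg (mul_nonneg ha₀ (sub_nonneg.2 ha₁)) (sq_nonneg x)]

theorem hasDerivAt_one_sub_one_sub_mul_exp_mul (a : ℝ) :
    HasDerivAt (fun x => 1 - (1 - x) * exp (a * x)) (1 - a) 0 := by
  refine ((((hasDerivAt_id' 0).const_sub 1).mul
    (((hasDerivAt_id' 0).const_mul a).exp)).const_sub 1).congr_deriv ?_
  simp [neg_add_eq_sub]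

theorem tendsto_one_sub_one_sub_mul_exp_mul_div (a : ℝ) :
    Tendsto (fun x => (1 - (1 - x) * exp (a * x)) / x) (𝓝[>] 0) (𝓝 (1 - a)) := by
  have := (hasDerivAt_iff_tendsto_slope_zero.1 (hasDerivAt_one_sub_one_sub_mul_exp_mul a)).mono_left
    (nhdsWithin_mono 0 fun x (hx : 0 < x) => hx.ne')
  refine this.congr fun x => ?_
  simp [div_eq_inv_mul]

theorem inf_ratio_eq_one_sub (α : ℝ) (hα : 0 < α) (hα1 : α < 1) :
    sInf ((fun x : ℝ => (1 - (1 - x) * Real.exp (α * x)) / x) '' Set.Ioo 0 1) = 1 - α := by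
  refine (isGLB_image_of_tendsto (Ioo_mem_nhdsGT one_pos) (fun x hx => ?_)
    (tendsto_one_sub_one_sub_mul_exp_mul_div α)).csInf_eq ((nonempty_Ioo.2 one_pos).image _)
  rw [le_div_iff₀ hx.1]
  linarith [one_sub_mul_exp_mul_le hα.le hα1.le hx.2]
end

section
/- Let N ≥ 1 and let p_1, ..., p_N ∈ (0,1]. Define V(h) = ∑_j h_j/p_j for h ∈ ℝ^N and λ* = ∑_j 1/p_j. Then for every h ∈ ℝ^N and every i, p_i·V(e_i·1 + (h+1)_{-i}) + (1-p_i)·V(h+1) = ∑_j h_j/p_j - h_i + ∑_j 1/p_j, where the first argument denotes the vector obtained from h+1 by setting the i-th coordinate to 1. Consequently, λ* + V(h) = min_i { p_i·V(1, (h+1)_{-i}) + (1-p_i)·V(h+1) } + max_i h_i. -/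
/-!
Scheduling user `i` replaces the age `h i + 1` by `1`, so with the linear value function
`V h = ∑ j, h j / p j` the expected next value is `V (h + 1) - h i`: the success probability `p i`
cancels against the weight `1 / p i`. The Bellman operator therefore minimises `C - h i` for a
constant `C`, and that minimum is `C - max_i h i`.
-/

open Finset

theorem Finset.inf'_const_sub {ι α : Type*} [AddCommGroup α] [Lattice α] [IsOrderedAddMonoid α]
    {s : Finset ι} (hs : s.Nonempty) (C : α) (f : ι → α) :
    s.inf' hs (fun i => C - f i) = C - s.sup' hs f :=
  (map_finset_sup' (OrderIso.subLeft C) hs f).symm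

section WeightedSum

variable {ι K : Type*} [Fintype ι] [DecidableEq ι]

theorem sum_update_div [DivisionRing K] (x p : ι → K) (i : ι) (a : K) :
    ∑ j, Function.update x i a j / p j = ∑ j, x j / p j + (a - x i) / p i := by
  rw [← sub_eq_iff_eq_add', ← sum_sub_distrib]
  simp only [← sub_div]
  rw [Fintype.sum_eq_single i fun j hj => by simp [hj]]
  simp

theorem mul_sum_update_div_add_one_sub_mul_sum_div [Field K] {p : ι → K} {i : ι} (hpi : p i ≠ 0)
    (x : ι → K) (a : K) :
    p i * (∑ j, Function.update x i a j / p j) + (1 - p i) * (∑ j, x j / p j) =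
      (∑ j, x j / p j) - x i + a := by
  rw [sum_update_div]
  field_simp
  ring

end WeightedSum

theorem bellman_solution (N : ℕ) (hN : 1 ≤ N) (p : Fin N → ℝ)
    (hp : ∀ i, 0 < p i ∧ p i ≤ 1) (h : Fin N → ℝ) :
    (∀ i : Fin N,
      p i * (∑ j, (Function.update (fun j => h j + 1) i 1) j / p j) +
          (1 - p i) * (∑ j, (h j + 1) / p j) =
        (∑ j, h j / p j) - h i + ∑ j, 1 / p j) ∧
    ((∑ j, 1 / p j) + (∑ j, h j / p j) =
      (Finset.univ.inf' ⟨⟨0, by omega⟩, Finset.mem_univ _⟩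
          (fun i : Fin N =>
            p i * (∑ j, (Function.update (fun j => h j + 1) i 1) j / p j) +
              (1 - p i) * (∑ j, (h j + 1) / p j))) +
        Finset.univ.sup' ⟨⟨0, by omega⟩, Finset.mem_univ _⟩ h) := by
  have hsplit : ∑ j, (h j + 1) / p j = (∑ j, h j / p j) + ∑ j, 1 / p j := by
    simp only [add_div, sum_add_distrib]
  have bellman_step : ∀ i : Fin N,
      p i * (∑ j, (Function.update (fun j => h j + 1) i 1) j / p j) +
          (1 - p i) * (∑ j, (h j + 1) / p j) =
        (∑ j, h j / p j) - h i + ∑ j, 1 / p j := fun i => by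
    rw [mul_sum_update_div_add_one_sub_mul_sum_div (hp i).1.ne', hsplit]
    ring
  refine ⟨bellman_step, ?_⟩
  -- the statement's nonemptiness witness is not syntactically `univ.Nonempty`, which blocks rewriting
  generalize_proofs
  simp only [bellman_step, sub_add_eq_add_sub, inf'_const_sub]
  ring
end

section
/- Let N ≥ 1, T ≥ 1 be integers and for each i let T_{i,1}, ..., T_{i,n_i}, D_i be nonnegative reals with ∑_{j=1}^{n_i} T_{i,j} + D_i = T. Then (1/(N·T)) · ∑_{i=1}^N ( ∑_{j=1}^{n_i} T_{i,j}(T_{i,j}+1)/2 + D_i(D_i+1)/2 ) ≥ (T/(2N)) · ∑_{i=1}^N 1/(n_i + 1) + 1/2. -/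
open Finset

theorem sq_sum_add_le_card_add_one_mul {ι : Type*} [Fintype ι] (f : ι → ℝ) (d : ℝ) :
    (∑ i, f i + d) ^ 2 ≤ (Fintype.card ι + 1) * (∑ i, f i ^ 2 + d ^ 2) := by
  have h := sq_sum_le_card_mul_sum_sq (s := (univ : Finset (Option ι)))
    (f := fun o => o.elim d f)
  simpa only [Fintype.sum_option, Option.elim, card_univ, Fintype.card_option, Nat.cast_add,
    Nat.cast_one, add_comm d, add_comm (d ^ 2)] using h

/-- A sample path of total length `T` split into the periods `f i` and the residual `d`: its
discrete age area is smallest when all `card ι + 1` periods are equal. -/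
theorem sq_div_card_add_one_add_le_sum_triangular {ι : Type*} [Fintype ι] (f : ι → ℝ)
    (d T : ℝ) (hsum : ∑ i, f i + d = T) :
    (T ^ 2 / (Fintype.card ι + 1) + T) / 2 ≤
      ∑ i, f i * (f i + 1) / 2 + d * (d + 1) / 2 := by
  have hsq : T ^ 2 / (Fintype.card ι + 1) ≤ ∑ i, f i ^ 2 + d ^ 2 := by
    rw [div_le_iff₀ (by positivity), ← hsum, mul_comm]
    exact sq_sum_add_le_card_add_one_mul f d
  have harea : ∑ i, f i * (f i + 1) / 2 + d * (d + 1) / 2 =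
      ((∑ i, f i ^ 2 + d ^ 2) + (∑ i, f i + d)) / 2 := by
    simp only [mul_add_one, ← sq, add_div, sum_add_distrib, ← sum_div]
    ring
  rw [harea, hsum]
  linarith

theorem aoi_sample_path_lower_bound_general (N T : ℕ) (hN : 1 ≤ N) (hT : 1 ≤ T)
    (n : Fin N → ℕ) (Tij : ∀ i : Fin N, Fin (n i) → ℝ) (D : Fin N → ℝ)
    (hsum : ∀ i, (∑ j, Tij i j) + D i = T) :
    (1 / ((N : ℝ) * T)) *
        ∑ i, ((∑ j, Tij i j * (Tij i j + 1) / 2) + D i * (D i + 1) / 2) ≥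
      ((T : ℝ) / (2 * N)) * (∑ i, 1 / ((n i : ℝ) + 1)) + 1 / 2 := by
  have hN0 : (N : ℝ) ≠ 0 := by positivity
  have hT0 : (T : ℝ) ≠ 0 := by positivity
  have per_user (i : Fin N) :
      ((T : ℝ) ^ 2 / ((n i : ℝ) + 1) + T) / 2 ≤
        ∑ j, Tij i j * (Tij i j + 1) / 2 + D i * (D i + 1) / 2 := by
    simpa only [Fintype.card_fin] using
      sq_div_card_add_one_add_le_sum_triangular (Tij i) (D i) T (hsum i)
  calc ((T : ℝ) / (2 * N)) * (∑ i, 1 / ((n i : ℝ) + 1)) + 1 / 2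
      = (1 / ((N : ℝ) * T)) * ∑ i, ((T : ℝ) ^ 2 / ((n i : ℝ) + 1) + T) / 2 := by
        simp only [add_div, sum_add_distrib, sum_const, card_univ, Fintype.card_fin,
          nsmul_eq_mul, div_eq_mul_one_div ((T : ℝ) ^ 2), mul_div_assoc, ← mul_sum, ← sum_div]
        field_simp
    _ ≤ _ := by gcongr with i; exact per_user i

theorem aoi_sample_path_lower_bound (N T : ℕ) (hN : 1 ≤ N) (hT : 1 ≤ T)
    (n : Fin N → ℕ) (Tij : ∀ i : Fin N, Fin (n i) → ℝ) (D : Fin N → ℝ)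
    (hTij : ∀ i j, 0 ≤ Tij i j) (hD : ∀ i, 0 ≤ D i)
    (hsum : ∀ i, (∑ j, Tij i j) + D i = T) :
    (1 / ((N : ℝ) * T)) *
        ∑ i, ((∑ j, Tij i j * (Tij i j + 1) / 2) + D i * (D i + 1) / 2) ≥
      ((T : ℝ) / (2 * N)) * (∑ i, 1 / ((n i : ℝ) + 1)) + 1 / 2 :=
  aoi_sample_path_lower_bound_general N T hN hT n Tij D hsum
end

section
/- Let 0 < p_min ≤ p_max ≤ 1 with p_max + p_min > 1, and let N ≥ 1 be an integer. Then for every integer k ≥ N, ∑_{j=0}^{N-1} C(k, j)·p_max^j·(1 - p_min)^{k-j} ≤ c·k^N·(1 - p_min)^k, where c = (1 - p_min)/((N-1)!·(p_max + p_min - 1)) · ((p_max/(1 - p_min))^N - 1), assuming p_max/(1-p_min) ≠ 1. -/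
/-
With q = 1 - p_min and r = p_max / q, the j-th summand is C(k, j) r^j q^k. Bounding every
binomial coefficient by k^N / (N-1)! leaves q^k times the geometric sum ∑_{j<N} r^j
= (r^N - 1)/(r - 1), and q (r - 1) = p_max + p_min - 1 turns this into the stated constant.
When p_min = 1 both sides vanish.
-/

open Finset Nat

theorem Nat.choose_mul_factorial_le_pow {j n k : ℕ} (hjn : j ≤ n) (hnk : n ≤ k) :
    k.choose j * n ! ≤ k ^ n := by
  obtain ⟨m, rfl⟩ := Nat.exists_eq_add_of_le hjn
  calc k.choose j * (j + m)!
      = k.descFactorial j * (j + 1).ascFactorial m := by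
        rw [← Nat.factorial_mul_ascFactorial, Nat.descFactorial_eq_factorial_mul_choose]
        ring
    _ ≤ k ^ j * (j + m) ^ m :=
        Nat.mul_le_mul (Nat.descFactorial_le_pow k j) (Nat.ascFactorial_le_pow_add j m)
    _ ≤ k ^ j * k ^ m := Nat.mul_le_mul_left _ (Nat.pow_le_pow_left hnk m)
    _ = k ^ (j + m) := (pow_add k j m).symm

theorem Nat.choose_le_pow_div_factorial_pred {j N k : ℕ} (hjN : j < N) (hNk : N ≤ k) :
    (k.choose j : ℝ) ≤ (k : ℝ) ^ N / (N - 1)! := by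
  rw [le_div_iff₀ (by positivity)]
  calc (k.choose j : ℝ) * (N - 1)! ≤ (k : ℝ) ^ (N - 1) := by
        exact_mod_cast Nat.choose_mul_factorial_le_pow (by omega) (by omega)
    _ ≤ (k : ℝ) ^ N := pow_le_pow_right₀ (by norm_cast; omega) (by omega)

theorem sum_range_choose_mul_pow_le {r : ℝ} (hr : 0 ≤ r) {N k : ℕ} (hNk : N ≤ k) :
    ∑ j ∈ range N, (k.choose j : ℝ) * r ^ j ≤ (k : ℝ) ^ N / (N - 1)! * ∑ j ∈ range N, r ^ j := by
  rw [mul_sum]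
  gcongr with j hj
  exact Nat.choose_le_pow_div_factorial_pred (mem_range.1 hj) hNk

theorem sum_range_choose_mul_pow_mul_pow_sub {r q : ℝ} {N k : ℕ} (hNk : N ≤ k) :
    ∑ j ∈ range N, (k.choose j : ℝ) * (r * q) ^ j * q ^ (k - j) =
      q ^ k * ∑ j ∈ range N, (k.choose j : ℝ) * r ^ j := by
  rw [mul_sum]
  refine sum_congr rfl fun j hj => ?_
  rw [mul_pow, ← pow_sub_mul_pow q (show j ≤ k by have := mem_range.1 hj; omega)]
  ring

theorem tail_prob_bound_general (pmin pmax : ℝ) (h0 : 0 < pmin) (h1 : pmin ≤ pmax)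
    (h2 : pmax ≤ 1) (hne : pmax / (1 - pmin) ≠ 1)
    (N : ℕ) (k : ℕ) (hk : N ≤ k) :
    ∑ j ∈ Finset.range N, (k.choose j : ℝ) * pmax ^ j * (1 - pmin) ^ (k - j) ≤
      ((1 - pmin) / (((N - 1).factorial : ℝ) * (pmax + pmin - 1)) *
          ((pmax / (1 - pmin)) ^ N - 1)) * (k : ℝ) ^ N * (1 - pmin) ^ k := by
  rcases (show 0 ≤ 1 - pmin by linarith).eq_or_lt with hq | hq
  · rw [← hq, zero_div, zero_mul, zero_mul, zero_mul]
    refine (sum_eq_zero fun j hj => ?_).le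
    rw [zero_pow (by have := mem_range.1 hj; omega), mul_zero]
  set q := 1 - pmin
  set r := pmax / q
  have hpmax : pmax = r * q := (div_mul_cancel₀ pmax hq.ne').symm
  have hden : pmax + pmin - 1 = q * (r - 1) := by rw [hpmax]; ring
  calc ∑ j ∈ range N, (k.choose j : ℝ) * pmax ^ j * q ^ (k - j)
      = q ^ k * ∑ j ∈ range N, (k.choose j : ℝ) * r ^ j := by
        rw [hpmax, sum_range_choose_mul_pow_mul_pow_sub hk]
    _ ≤ q ^ k * ((k : ℝ) ^ N / (N - 1)! * ∑ j ∈ range N, r ^ j) := by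
        gcongr
        exact sum_range_choose_mul_pow_le (div_nonneg (by linarith) hq.le) hk
    _ = _ := by
        rw [geom_sum_eq hne, hden]
        field_simp

theorem tail_prob_bound (pmin pmax : ℝ) (h0 : 0 < pmin) (h1 : pmin ≤ pmax)
    (h2 : pmax ≤ 1) (h3 : 1 < pmax + pmin) (hne : pmax / (1 - pmin) ≠ 1)
    (N : ℕ) (hN : 1 ≤ N) (k : ℕ) (hk : N ≤ k) :
    ∑ j ∈ Finset.range N, (k.choose j : ℝ) * pmax ^ j * (1 - pmin) ^ (k - j) ≤
      ((1 - pmin) / (((N - 1).factorial : ℝ) * (pmax + pmin - 1)) *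
          ((pmax / (1 - pmin)) ^ N - 1)) * (k : ℝ) ^ N * (1 - pmin) ^ k :=
  tail_prob_bound_general pmin pmax h0 h1 h2 hne N k hk
end
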